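/- The presheaf monad on quantale-enriched categories is simple (Theorem 4.2, quantale-enriched case): let f : (X,a) → (Y,b) be a V-functor between V-categories, Kf = {(φ,y) ∈ PX × Y | ∀ y' ∈ Y, ⨆_{x∈X} b(y', f x) ⊗ φ(x) ≤ b(y', y)} with V-category structure ã((φ,y),(φ',y')) = â(φ,φ') ⊓ b(y,y'), and Lf : X → Kf defined by Lf x = (a(−,x), f x). Then Lf is well defined (Lf x ∈ Kf for all x), and P(Lf) is left adjoint to μ_X ∘ P(q_f): for every presheaf Θ on (X,a) and every presheaf Ξ on (Kf, ã), (∀ (φ,y) ∈ Kf, ⨆_{x∈X} ( (â(φ, a(−,x)) ⊓ b(y, f x)) ⊗ Θ(x) ) ≤ Ξ(φ,y)) ⟺ (∀ x ∈ X, Θ(x) ≤ ⨆_{(φ,y)∈Kf} φ(x) ⊗ Ξ(φ,y)). -/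

import Mathlib

/-!
Context: `V` is a commutative unital quantale, modelled as a complete lattice
with a commutative monoid structure (unit `k = 1`, tensor `⊗ = *`) satisfying
the quantale distributivity law (`IsQuantale`).  The residuation `u ⇨ w` is
`sSup {v | u * v ≤ w}`.
-/

universe u v

variable {V : Type u}

/-- Residuation in a quantale: `u ⇨ w = sSup {v | u * v ≤ w}`. -/
noncomputable def resid [CompleteLattice V] [Mul V] (u w : V) : V :=
  sSup {v | u * v ≤ w}

/-- `(X, a)` is a `V`-category: `k ≤ a x x` and `a x y ⊗ a y z ≤ a x z`. -/
def IsVCat [CompleteLattice V] [CommMonoid V] {X : Type v} (a : X → X → V) : Prop :=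
  (∀ x, (1 : V) ≤ a x x) ∧ ∀ x y z, a x y * a y z ≤ a x z

/-- A presheaf on the `V`-category `(X, a)`: `a x x' ⊗ φ x' ≤ φ x`. -/
def IsPresheaf [CompleteLattice V] [Mul V] {X : Type v} (a : X → X → V) (φ : X → V) : Prop :=
  ∀ x x', a x x' * φ x' ≤ φ x

/-- The `V`-category structure on presheaves: `â(φ, ψ) = ⨅ x, (φ x ⇨ ψ x)`. -/
noncomputable def ahat [CompleteLattice V] [Mul V] {X : Type v} (φ ψ : X → V) : V :=
  ⨅ x, resid (φ x) (ψ x)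

/-- The comma object `K f = P f ↓ y_Y`: pairs `(φ, y)` with `φ` a presheaf on
`(X, a)` and `P f φ ≤ y^*`. -/
def KComma [CompleteLattice V] [CommMonoid V] {X Y : Type v}
    (a : X → X → V) (b : Y → Y → V) (f : X → Y) : Type (max u v) :=
  {p : (X → V) × Y //
    IsPresheaf a p.1 ∧ ∀ y', (⨆ x, b y' (f x) * p.1 x) ≤ b y' p.2}

/-!
Write `L x = (a(−, x), f x)` (`KComma.yoneda`) and `ã` (`KComma.hom`) for the structure on
`K f`. Since `k ≤ ã(L x, L x)`, the inequality `P(L) Θ ≤ Ξ` gives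
`Θ x ≤ a(x, x) ⊗ Ξ(L x) ≤ ⨆_p p.1(x) ⊗ Ξ p`. Conversely, the Yoneda lemma in `PX` and the
comma condition give `ã(q, L x) ⊗ φ(x) ≤ ã(q, (φ, y))`, and since `Ξ` is a presheaf on `K f`,
`ã(q, L x) ⊗ Θ(x) ≤ ⨆_p ã(q, L x) ⊗ p.1(x) ⊗ Ξ p ≤ Ξ q`.
-/

section Residuation

variable [CompleteLattice V]

theorem le_resid_iff [Semigroup V] [IsQuantale V] {u v w : V} :
    v ≤ resid u w ↔ u * v ≤ w :=
  Quantale.rightMulResiduation_le_iff_mul_le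

theorem le_ahat_iff [Semigroup V] [IsQuantale V] {X : Type v} {φ ψ : X → V} {c : V} :
    c ≤ ahat φ ψ ↔ ∀ x, φ x * c ≤ ψ x := by
  simp only [ahat, le_iInf_iff, le_resid_iff]

theorem one_le_ahat_self [Monoid V] [IsQuantale V] {X : Type v} (φ : X → V) :
    (1 : V) ≤ ahat φ φ :=
  le_ahat_iff.2 fun _ => (mul_one _).le

theorem ahat_representable_mul_le [Semigroup V] [IsQuantale V] {X : Type v} {a : X → X → V}
    {φ : X → V} (hφ : IsPresheaf a φ) (ψ : X → V) (x : X) :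
    ahat ψ (fun x' => a x' x) * φ x ≤ ahat ψ φ :=
  le_ahat_iff.2 fun x' =>
    calc ψ x' * (ahat ψ (fun x' => a x' x) * φ x)
        = ψ x' * ahat ψ (fun x' => a x' x) * φ x := (mul_assoc _ _ _).symm
      _ ≤ a x' x * φ x := mul_le_mul_left (le_ahat_iff.1 le_rfl x') _
      _ ≤ φ x' := hφ x' x

end Residuation

section VCat

variable [CompleteLattice V] [CommMonoid V] {X Y : Type v}
  {a : X → X → V} {b : Y → Y → V} {f : X → Y}

theorem IsVCat.isPresheaf_representable (ha : IsVCat a) (x : X) :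
    IsPresheaf a (fun x' => a x' x) :=
  fun x' x'' => ha.2 x' x'' x

noncomputable def KComma.hom (p q : KComma a b f) : V :=
  ahat p.1.1 q.1.1 ⊓ b p.1.2 q.1.2

theorem KComma.mul_le_snd (p : KComma a b f) (y : Y) (x : X) :
    b y (f x) * p.1.1 x ≤ b y p.1.2 :=
  (le_iSup (fun x' => b y (f x') * p.1.1 x') x).trans (p.2.2 y)

variable [IsQuantale V]

theorem iSup_mul_representable_le (hb : IsVCat b) (hf : ∀ x x', a x x' ≤ b (f x) (f x'))
    (y : Y) (x : X) : (⨆ x', b y (f x') * a x' x) ≤ b y (f x) :=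
  iSup_le fun x' =>
    calc b y (f x') * a x' x ≤ b y (f x') * b (f x') (f x) := mul_le_mul_right (hf x' x) _
      _ ≤ b y (f x) := hb.2 y (f x') (f x)

namespace KComma

def yoneda (ha : IsVCat a) (hb : IsVCat b) (hf : ∀ x x', a x x' ≤ b (f x) (f x')) (x : X) :
    KComma a b f :=
  ⟨(fun x' => a x' x, f x), ha.isPresheaf_representable x,
    fun y => iSup_mul_representable_le hb hf y x⟩

theorem one_le_hom_self (hb : IsVCat b) (p : KComma a b f) : (1 : V) ≤ hom p p :=
  le_inf (one_le_ahat_self _) (hb.1 _)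

theorem hom_yoneda_mul_le (ha : IsVCat a) (hb : IsVCat b)
    (hf : ∀ x x', a x x' ≤ b (f x) (f x')) (q p : KComma a b f) (x : X) :
    hom q (yoneda ha hb hf x) * p.1.1 x ≤ hom q p :=
  le_inf ((mul_le_mul_left inf_le_left _).trans (ahat_representable_mul_le p.2.1 q.1.1 x))
    ((mul_le_mul_left inf_le_right _).trans (mul_le_snd p q.1.2 x))

theorem iSup_hom_yoneda_mul_le_iff (ha : IsVCat a) (hb : IsVCat b)
    (hf : ∀ x x', a x x' ≤ b (f x) (f x')) {Θ : X → V} {Ξ : KComma a b f → V}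
    (hΞ : IsPresheaf hom Ξ) :
    (∀ p, (⨆ x, hom p (yoneda ha hb hf x) * Θ x) ≤ Ξ p) ↔
      ∀ x, Θ x ≤ ⨆ p : KComma a b f, p.1.1 x * Ξ p := by
  constructor
  · intro H x
    let p := yoneda ha hb hf x
    have hΘp : Θ x ≤ Ξ p :=
      calc Θ x = 1 * Θ x := (one_mul _).symm
        _ ≤ hom p p * Θ x := mul_le_mul_left (one_le_hom_self hb p) _
        _ ≤ Ξ p := (le_iSup (fun x' => hom p (yoneda ha hb hf x') * Θ x') x).trans (H p)
    calc Θ x = 1 * Θ x := (one_mul _).symm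
      _ ≤ a x x * Ξ p := mul_le_mul' (ha.1 x) hΘp
      _ ≤ ⨆ q : KComma a b f, q.1.1 x * Ξ q := le_iSup (fun q : KComma a b f => q.1.1 x * Ξ q) p
  · intro H q
    refine iSup_le fun x => ?_
    calc hom q (yoneda ha hb hf x) * Θ x
        ≤ hom q (yoneda ha hb hf x) * ⨆ p : KComma a b f, p.1.1 x * Ξ p :=
          mul_le_mul_right (H x) _
      _ = ⨆ p : KComma a b f, hom q (yoneda ha hb hf x) * p.1.1 x * Ξ p := by
          rw [Quantale.mul_iSup_distrib]; simp only [mul_assoc]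
      _ ≤ Ξ q := iSup_le fun p =>
          (mul_le_mul_left (hom_yoneda_mul_le ha hb hf q p x) _).trans (hΞ q p)

end KComma

end VCat

/-- The presheaf monad on `V`-categories is simple: `L f` is well defined and
`P (L f) ⊣ μ_X ∘ P (q_f)`, where `L f x = (a (−, x), f x)`. -/
theorem presheaf_monad_simple [CompleteLattice V] [CommMonoid V] [IsQuantale V]
    {X Y : Type v} (a : X → X → V) (b : Y → Y → V)
    (ha : IsVCat a) (hb : IsVCat b)
    (f : X → Y) (hf : ∀ x x', a x x' ≤ b (f x) (f x')) :
    (∀ x : X, IsPresheaf a (fun x' => a x' x) ∧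
      ∀ y', (⨆ x', b y' (f x') * a x' x) ≤ b y' (f x)) ∧
    (∀ Θ : X → V, IsPresheaf a Θ →
      ∀ Ξ : KComma a b f → V,
      IsPresheaf (fun p q : KComma a b f =>
        ahat p.1.1 q.1.1 ⊓ b p.1.2 q.1.2) Ξ →
      ((∀ p : KComma a b f,
          (⨆ x, (ahat p.1.1 (fun x' => a x' x) ⊓ b p.1.2 (f x)) * Θ x) ≤ Ξ p) ↔
        ∀ x, Θ x ≤ ⨆ p : KComma a b f, p.1.1 x * Ξ p)) :=
  ⟨fun x => (KComma.yoneda ha hb hf x).2,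
    fun _ _ _ hΞ => KComma.iSup_hom_yoneda_mul_le_iff ha hb hf hΞ⟩
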